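/- For a finite quandle Q, the abelianization of the enveloping group G(Q) is isomorphic to the free abelian group on the set of orbits of Q under the action of Inn(Q), via an isomorphism under which the abelianization map sends the generator φ_Q(x) to the basis element given by the orbit of x. -/

import Mathlib

open scoped Quandles
/-- The inner automorphism group of a rack/quandle `Q`: the subgroup of permutations
of `Q` generated by the left translations `L_x = Rack.act' x`. -/
def QdlInn (Q : Type*) [Rack Q] : Subgroup (Equiv.Perm Q) :=
  Subgroup.closure (Set.range (Rack.act' (R := Q)))

/-- The quandle morphism `θ : Q → Conj (Inn Q)`, `x ↦ L_x`. -/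
def QdlTheta (Q : Type*) [Rack Q] : ShelfHom Q (Quandle.Conj (QdlInn Q)) where
  toFun x := ⟨Rack.act' x, Subgroup.subset_closure ⟨x, rfl⟩⟩
  map_act' := by
    intro x y
    simp only [Quandle.conj_act_eq_conj]
    exact Subtype.ext (Rack.ad_conj x y)

/-- The induced group morphism `θ_{G(Q)} : G(Q) → Inn(Q)`. -/
def QdlThetaG (Q : Type*) [Rack Q] : Rack.EnvelGroup Q →* QdlInn Q :=
  Rack.toEnvelGroup.map (QdlTheta Q)

/-- `Z₀`, the kernel of `θ_{G(Q)}`. -/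
def QdlZ0 (Q : Type*) [Rack Q] : Subgroup (Rack.EnvelGroup Q) :=
  (QdlThetaG Q).ker

section Reps

variable {Q : Type*} {V : Type*} [AddCommGroup V] [Module ℂ V]

/-- `ρ : Q → GL(V)` is a quandle (rack) representation: `ρ(x ◃ y) = ρ(x) ρ(y) ρ(x)⁻¹`. -/
def IsQdlRep [Shelf Q] (ρ : Q → (V →ₗ[ℂ] V)ˣ) : Prop :=
  ∀ x y : Q, ρ (x ◃ y) = ρ x * ρ y * (ρ x)⁻¹

/-- A family `ρ : Q → GL(V)` is irreducible if the only subspaces invariant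
under all `ρ x` are `0` and `V`. -/
def QdlIrred (ρ : Q → (V →ₗ[ℂ] V)ˣ) : Prop :=
  ∀ W : Submodule ℂ V, (∀ x : Q, ∀ v ∈ W, (ρ x : V →ₗ[ℂ] V) v ∈ W) → W = ⊥ ∨ W = ⊤

/-- A group representation `σ : G →* GL(V)` is irreducible if the only subspaces
invariant under all `σ g` are `0` and `V`. -/
def GrpIrred {G : Type*} [Group G] (σ : G →* (V →ₗ[ℂ] V)ˣ) : Prop :=
  ∀ W : Submodule ℂ V, (∀ g : G, ∀ v ∈ W, (σ g : V →ₗ[ℂ] V) v ∈ W) → W = ⊥ ∨ W = ⊤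

end Reps

/-- A character of a quandle: a map `χ : Q → ℂˣ` with `χ(x ◃ y) = χ(y)`. -/
def QdlChar {Q : Type*} [Shelf Q] (χ : Q → ℂˣ) : Prop :=
  ∀ x y : Q, χ (x ◃ y) = χ y

/-! In an abelian quotient of `G(Q)` the defining relation `x y x⁻¹ = x ▷ y` collapses to
`y = x ▷ y`, so the image of a generator depends only on its `Inn(Q)`-orbit, and no other
relation survives. Hence homomorphisms from `G(Q)^ab` to an abelian group and from the free
abelian group on the orbits are both the functions on `Q` constant on orbits, and the two
induced maps are mutually inverse. -/

namespace Rack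

open Quandle

variable {R : Type*} [Rack R]

theorem EnvelGroup.hom_ext {G : Type*} [Group G] {f g : EnvelGroup R →* G}
    (h : ∀ x : R, f (toEnvelGroup R x) = g (toEnvelGroup R x)) : f = g :=
  toEnvelGroup.map.symm.injective (DFunLike.ext _ _ h)

theorem _root_.ShelfHom.map_act_of_comm {G : Type*} [CommGroup G] (f : R →◃ Conj G) (x y : R) :
    f (x ◃ y) = f y := by
  rw [ShelfHom.map_act, conj_act_eq_conj, mul_inv_cancel_comm]

theorem apply_eq_of_mem_qdlInn {α : Type*} {f : R → α} (hf : ∀ x y, f (x ◃ y) = f y)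
    {g : Equiv.Perm R} (hg : g ∈ QdlInn R) (y : R) : f (g y) = f y := by
  induction hg using Subgroup.closure_induction generalizing y with
  | mem g hg => obtain ⟨x, rfl⟩ := hg; exact hf x y
  | one => rfl
  | mul g h _ _ ihg ihh => exact (ihg (h y)).trans (ihh y)
  | inv g _ ih => simpa using (ih (g⁻¹ y)).symm

variable (R) in
abbrev InnOrbits : Type _ := Quotient (MulAction.orbitRel (QdlInn R) R)

def InnOrbits.lift {α : Type*} (f : R → α) (hf : ∀ x y, f (x ◃ y) = f y) : InnOrbits R → α :=
  Quotient.lift f fun _ y ⟨g, hg⟩ => hg ▸ apply_eq_of_mem_qdlInn hf g.2 y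

theorem InnOrbits.mk_act (x y : R) :
    (⟦x ◃ y⟧ : InnOrbits R) = ⟦y⟧ :=
  Quotient.sound ⟨⟨act' x, Subgroup.subset_closure ⟨x, rfl⟩⟩, rfl⟩

variable (R) in
def toFreeOrbits : R →◃ Conj (Multiplicative (FreeAbelianGroup (InnOrbits R))) where
  toFun x := .ofAdd (.of ⟦x⟧)
  map_act' {x y} := by rw [conj_act_eq_conj, mul_inv_cancel_comm, InnOrbits.mk_act]

noncomputable def abelianizationEnvelGroupToFreeOrbits :
    Abelianization (EnvelGroup R) →* Multiplicative (FreeAbelianGroup (InnOrbits R)) :=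
  Abelianization.lift (toEnvelGroup.map (toFreeOrbits R))

theorem abelianizationEnvelGroupToFreeOrbits_of (x : R) :
    abelianizationEnvelGroupToFreeOrbits (Abelianization.of (toEnvelGroup R x)) =
      .ofAdd (.of ⟦x⟧) :=
  rfl

noncomputable def freeOrbitsToAbelianizationEnvelGroup :
    Multiplicative (FreeAbelianGroup (InnOrbits R)) →* Abelianization (EnvelGroup R) :=
  AddMonoidHom.toMultiplicativeLeft <| FreeAbelianGroup.lift <|
    InnOrbits.lift (fun x => .ofMul (Abelianization.of (toEnvelGroup R x))) fun x y =>
      congrArg Additive.ofMul <|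
        ((Conj.map Abelianization.of).comp (toEnvelGroup R)).map_act_of_comm x y

theorem freeOrbitsToAbelianizationEnvelGroup_of (x : R) :
    freeOrbitsToAbelianizationEnvelGroup (.ofAdd (.of ⟦x⟧)) =
      Abelianization.of (toEnvelGroup R x) := by
  simp [freeOrbitsToAbelianizationEnvelGroup, InnOrbits.lift]

noncomputable def abelianizationEnvelGroupEquiv :
    Abelianization (EnvelGroup R) ≃* Multiplicative (FreeAbelianGroup (InnOrbits R)) :=
  abelianizationEnvelGroupToFreeOrbits.toMulEquiv freeOrbitsToAbelianizationEnvelGroup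
    (Abelianization.hom_ext _ _ <| EnvelGroup.hom_ext fun x => by
      simp [abelianizationEnvelGroupToFreeOrbits_of, freeOrbitsToAbelianizationEnvelGroup_of])
    (AddMonoidHom.toMultiplicative.symm.injective <| FreeAbelianGroup.lift_ext _ _ <|
      Quotient.ind fun x => by
        simp [abelianizationEnvelGroupToFreeOrbits_of, freeOrbitsToAbelianizationEnvelGroup_of])

theorem abelianizationEnvelGroupEquiv_of (x : R) :
    abelianizationEnvelGroupEquiv (Abelianization.of (toEnvelGroup R x)) = .ofAdd (.of ⟦x⟧) :=
  abelianizationEnvelGroupToFreeOrbits_of x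

end Rack

theorem stmt11_general (Q : Type*) [Quandle Q] :
    ∃ e : Abelianization (Rack.EnvelGroup Q) ≃*
        Multiplicative (FreeAbelianGroup (Quotient (MulAction.orbitRel (QdlInn Q) Q))),
      ∀ x : Q, e (Abelianization.of (Rack.toEnvelGroup Q x)) =
        Multiplicative.ofAdd
          (FreeAbelianGroup.of (Quotient.mk (MulAction.orbitRel (QdlInn Q) Q) x)) :=
  ⟨Rack.abelianizationEnvelGroupEquiv, Rack.abelianizationEnvelGroupEquiv_of⟩

/-- the abelianization of `G(Q)` is isomorphic to the free abelian group on
the set of orbits of `Q` under `Inn(Q)`, the abelianization map sending `φ_Q(x)` to the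
basis element given by the orbit of `x`. -/
theorem stmt11 (Q : Type*) [Quandle Q] [Finite Q] :
    ∃ e : Abelianization (Rack.EnvelGroup Q) ≃*
        Multiplicative (FreeAbelianGroup (Quotient (MulAction.orbitRel (QdlInn Q) Q))),
      ∀ x : Q, e (Abelianization.of (Rack.toEnvelGroup Q x)) =
        Multiplicative.ofAdd
          (FreeAbelianGroup.of (Quotient.mk (MulAction.orbitRel (QdlInn Q) Q) x)) :=
  stmt11_general Q
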